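/- Let m ≥ 1, g : Fin m → ℝ with g i ≥ 0, P : Fin m → ℝ with P i ≥ 0, N > 0, and for i < j let ρ : Fin m → Fin m → ℂ with |ρ i j| ≤ 1. Define σ²(θ) = (∑ i, (g i)^2 * P i) + N + 2 * ∑_{i<j} g i * g j * Real.sqrt (P i * P j) * Re(ρ i j * e^{i(θ i − θ j)}). Then the infimum over θ : Fin m → ℝ of σ²(θ) is at most (∑ i, (g i)^2 * P i) + N, with equality if ρ i j = 0 for all i < j. -/

import Mathlib

open Real Complex Finset

/-!
Average the cross term over the phase vectors `θ ∈ {0, π}^m`. At such `θ` one has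
`e^{i(θ_i - θ_j)} = s_i s_j` for a sign vector `s`, and for `i ≠ j` the average of `s_i s_j`
over all sign vectors is zero. So the cross term has average zero over these phases and is
nonpositive for one of them, which bounds the infimum. When `ρ` vanishes the cross term is
identically zero.
-/

section SignVectors

variable {ι : Type*} [Fintype ι] [DecidableEq ι]

theorem sum_units_mul_units_eq_zero {i j : ι} (hij : i ≠ j) :
    ∑ s : ι → ℤˣ, ((s i * s j : ℤ) : ℝ) = 0 := by
  -- flipping the sign of coordinate `i` is a bijection that negates every summand
  set flip : ι → ℤˣ := Pi.mulSingle i (-1)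
  have h_flip : ∀ s : ι → ℤˣ,
      (((s * flip) i * (s * flip) j : ℤ) : ℝ) = -((s i * s j : ℤ) : ℝ) := fun s => by
    simp [flip, hij.symm]
  have h_neg := Equiv.sum_comp (Equiv.mulRight flip) fun s : ι → ℤˣ => ((s i * s j : ℤ) : ℝ)
  simp only [Equiv.coe_mulRight, h_flip, sum_neg_distrib] at h_neg
  linarith

theorem exists_units_sum_mul_nonpos (b : ι → ι → ℝ) (hb : ∀ i, b i i = 0) :
    ∃ s : ι → ℤˣ, ∑ i, ∑ j, b i j * ((s i * s j : ℤ) : ℝ) ≤ 0 := by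
  have h_avg : ∑ s : ι → ℤˣ, ∑ i, ∑ j, b i j * ((s i * s j : ℤ) : ℝ) = 0 := by
    rw [sum_comm]
    refine sum_eq_zero fun i _ => ?_
    rw [sum_comm]
    refine sum_eq_zero fun j _ => ?_
    rw [← mul_sum]
    rcases eq_or_ne i j with rfl | hij
    · rw [hb, zero_mul]
    · rw [sum_units_mul_units_eq_zero hij, mul_zero]
  obtain ⟨s, -, hs⟩ := exists_le_of_sum_le (g := fun _ => (0 : ℝ)) univ_nonempty
    (by rw [h_avg, sum_const_zero])
  exact ⟨s, hs⟩

end SignVectors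

noncomputable def signPhase (u : ℤˣ) : ℝ := if u = 1 then 0 else π

theorem re_mul_exp_signPhase_sub (z : ℂ) (u v : ℤˣ) :
    (z * exp ((signPhase u - signPhase v) * I)).re = ((u * v : ℤ) : ℝ) * z.re := by
  rcases Int.units_eq_one_or u with rfl | rfl <;> rcases Int.units_eq_one_or v with rfl | rfl <;>
    simp [signPhase, exp_pi_mul_I, Complex.exp_neg]

theorem abs_re_mul_exp_ofReal_mul_I_le (z : ℂ) (x : ℝ) : |(z * exp (x * I)).re| ≤ ‖z‖ :=
  (abs_re_le_norm _).trans_eq (by rw [norm_mul, norm_exp_ofReal_mul_I, mul_one])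

section CrossTerm

variable {ι : Type*} [Fintype ι] [LinearOrder ι]

noncomputable def crossTerm (a : ι → ι → ℝ) (ρ : ι → ι → ℂ) (θ : ι → ℝ) : ℝ :=
  ∑ i, ∑ j, if i < j then a i j * (ρ i j * exp ((θ i - θ j) * I)).re else 0

theorem neg_sum_le_crossTerm (a : ι → ι → ℝ) (ρ : ι → ι → ℂ) (θ : ι → ℝ) :
    -∑ i, ∑ j, |a i j| * ‖ρ i j‖ ≤ crossTerm a ρ θ := by
  simp only [crossTerm, ← sum_neg_distrib]
  refine sum_le_sum fun i _ => sum_le_sum fun j _ => ?_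
  split_ifs
  · calc -(|a i j| * ‖ρ i j‖)
        ≤ -|a i j * (ρ i j * exp ((θ i - θ j : ℝ) * I)).re| := by
          rw [abs_mul]; gcongr; exact abs_re_mul_exp_ofReal_mul_I_le _ _
      _ ≤ _ := by push_cast; exact neg_abs_le _
  · exact neg_nonpos.mpr (mul_nonneg (abs_nonneg _) (norm_nonneg _))

theorem exists_crossTerm_nonpos [DecidableEq ι] (a : ι → ι → ℝ) (ρ : ι → ι → ℂ) :
    ∃ θ : ι → ℝ, crossTerm a ρ θ ≤ 0 := by
  obtain ⟨s, hs⟩ := exists_units_sum_mul_nonpos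
    (fun i j => if i < j then a i j * (ρ i j).re else 0) (fun i => by simp)
  refine ⟨fun i => signPhase (s i), le_of_eq_of_le ?_ hs⟩
  refine sum_congr rfl fun i _ => sum_congr rfl fun j _ => ?_
  split_ifs
  · rw [re_mul_exp_signPhase_sub]; ring
  · rw [zero_mul]

theorem crossTerm_eq_zero {a : ι → ι → ℝ} {ρ : ι → ι → ℂ} (hρ : ∀ i j, i < j → ρ i j = 0)
    (θ : ι → ℝ) : crossTerm a ρ θ = 0 :=
  sum_eq_zero fun i _ => sum_eq_zero fun j _ => by
    split_ifs with hij
    · simp [hρ i j hij]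
    · rfl

end CrossTerm

theorem stmt_1_general (m : ℕ) (g P : Fin m → ℝ) (N : ℝ) (ρ : Fin m → Fin m → ℂ) :
    (⨅ θ : Fin m → ℝ,
        ((∑ i, (g i) ^ 2 * P i) + N +
          2 * ∑ i, ∑ j, if i < j then
            g i * g j * Real.sqrt (P i * P j) *
              (ρ i j * Complex.exp ((θ i - θ j) * Complex.I)).re else 0))
      ≤ (∑ i, (g i) ^ 2 * P i) + N ∧
    ((∀ i j, i < j → ρ i j = 0) →
      (⨅ θ : Fin m → ℝ,
        ((∑ i, (g i) ^ 2 * P i) + N +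
          2 * ∑ i, ∑ j, if i < j then
            g i * g j * Real.sqrt (P i * P j) *
              (ρ i j * Complex.exp ((θ i - θ j) * Complex.I)).re else 0))
        = (∑ i, (g i) ^ 2 * P i) + N) := by
  set a : Fin m → Fin m → ℝ := fun i j => g i * g j * Real.sqrt (P i * P j)
  set base := (∑ i, (g i) ^ 2 * P i) + N
  change (⨅ θ, base + 2 * crossTerm a ρ θ) ≤ base ∧
    ((∀ i j, i < j → ρ i j = 0) → (⨅ θ, base + 2 * crossTerm a ρ θ) = base)
  have h_bdd : BddBelow (Set.range fun θ => base + 2 * crossTerm a ρ θ) := by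
    refine ⟨base - 2 * ∑ i, ∑ j, |a i j| * ‖ρ i j‖, ?_⟩
    rintro _ ⟨θ, rfl⟩
    linarith [neg_sum_le_crossTerm a ρ θ]
  obtain ⟨θ₀, hθ₀⟩ := exists_crossTerm_nonpos a ρ
  refine ⟨ciInf_le_of_le h_bdd θ₀ (by linarith), fun hρ => ?_⟩
  simp only [crossTerm_eq_zero hρ, mul_zero, add_zero, ciInf_const]

theorem stmt_1 (m : ℕ) (hm : 1 ≤ m) (g P : Fin m → ℝ)
    (hg : ∀ i, 0 ≤ g i) (hP : ∀ i, 0 ≤ P i) (N : ℝ) (hN : 0 < N)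
    (ρ : Fin m → Fin m → ℂ) (hρ : ∀ i j, i < j → ‖ρ i j‖ ≤ 1) :
    (⨅ θ : Fin m → ℝ,
        ((∑ i, (g i) ^ 2 * P i) + N +
          2 * ∑ i, ∑ j, if i < j then
            g i * g j * Real.sqrt (P i * P j) *
              (ρ i j * Complex.exp ((θ i - θ j) * Complex.I)).re else 0))
      ≤ (∑ i, (g i) ^ 2 * P i) + N ∧
    ((∀ i j, i < j → ρ i j = 0) →
      (⨅ θ : Fin m → ℝ,
        ((∑ i, (g i) ^ 2 * P i) + N +
          2 * ∑ i, ∑ j, if i < j then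
            g i * g j * Real.sqrt (P i * P j) *
              (ρ i j * Complex.exp ((θ i - θ j) * Complex.I)).re else 0))
        = (∑ i, (g i) ^ 2 * P i) + N) :=
  stmt_1_general m g P N ρ
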